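/- arXiv:1403.0424 — 5 statements merged into one kernel-verified Lean document; each statement's English description precedes it below -/
import Mathlib

section
/- Let $a \in \mathbb{R}$, $l > 0$, and $\lambda \in \mathbb{C}^*$. Then $\lambda^2$ is an eigenvalue of the operator $T_a = -d^2/dy^2$ on $L^2(0,l)$ with boundary conditions $u'(0) = -i a u(0)$, $u'(l) = i a u(l)$ if and only if $(a - \lambda)^2 e^{2 i \lambda l} = (a + \lambda)^2$. -/
/-!
For `s ∈ {iλ, -iλ}` the quantity `(u' + s u) e^{-s x}` is a first integral of `-u'' = λ² u`.
Evaluated at `x = l` and combined with the boundary conditions, the two first integrals give two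
linear relations between `u 0` and `u l`; eliminating `u l` yields
`((a - λ)² e^{2iλl} - (a + λ)²) u 0 = 0`. If `u 0 = 0`, the condition at `0` forces `u' 0 = 0`
as well, and the two first integrals then give `2iλ u = 0`. Conversely
`(λ - a) e^{iλx} + (λ + a) e^{-iλx}` satisfies the condition at `0` and the ODE, and satisfies
the condition at `l` exactly when the transcendental equation holds.
-/

open Complex Set

lemma hasDerivAt_cexp_mul_ofReal (c : ℂ) (x : ℝ) :
    HasDerivAt (fun t : ℝ => cexp (c * t)) (c * cexp (c * x)) x := by
  simpa [mul_comm] using (((hasDerivAt_id (x : ℂ)).const_mul c).cexp).comp_ofReal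

section FirstIntegral

variable {u : ℝ → ℂ} {s : ℂ} {a b : ℝ}

theorem deriv_add_mul_eq_mul_cexp (hu : ContDiff ℝ 2 u)
    (hode : ∀ x ∈ Ico a b, deriv (deriv u) x = s ^ 2 * u x) :
    ∀ x ∈ Icc a b, deriv u x + s * u x = (deriv u a + s * u a) * cexp (s * (x - a)) := by
  have hu₁ : Differentiable ℝ u := hu.differentiable (by norm_num)
  have hu₂ : Differentiable ℝ (deriv u) := hu.differentiable_deriv_two
  have hF : ∀ t, HasDerivAt (fun t : ℝ => (deriv u t + s * u t) * cexp (-s * t))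
      ((deriv (deriv u) t - s ^ 2 * u t) * cexp (-s * t)) t := by
    intro t
    have h : HasDerivAt (fun y => deriv u y + s * u y) (deriv (deriv u) t + s * deriv u t) t :=
      (hu₂ t).hasDerivAt.add ((hu₁ t).hasDerivAt.const_mul s)
    exact (h.mul (hasDerivAt_cexp_mul_ofReal (-s) t)).congr_deriv (by ring)
  have hconst := constant_of_has_deriv_right_zero (a := a) (b := b)
    (fun t _ => (hF t).continuousAt.continuousWithinAt)
    (fun t ht => by simpa [hode t ht] using (hF t).hasDerivWithinAt)
  intro x hx
  have hexp : ∀ t : ℝ, cexp (-s * t) * cexp (s * x) = cexp (s * (x - t)) := fun t => by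
    rw [← exp_add]; congr 1; ring
  calc deriv u x + s * u x = (deriv u x + s * u x) * cexp (-s * x) * cexp (s * x) := by
        rw [mul_assoc, hexp, sub_self, mul_zero, exp_zero, mul_one]
    _ = (deriv u a + s * u a) * cexp (-s * a) * cexp (s * x) := by rw [hconst x hx]
    _ = _ := by rw [mul_assoc, hexp]

theorem eq_zero_of_eq_zero_of_deriv_eq_zero (hu : ContDiff ℝ 2 u) (hs : s ≠ 0)
    (hode : ∀ x ∈ Ico a b, deriv (deriv u) x = s ^ 2 * u x)
    (h₀ : u a = 0) (h₁ : deriv u a = 0) : ∀ x ∈ Icc a b, u x = 0 := by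
  intro x hx
  have hplus := deriv_add_mul_eq_mul_cexp hu hode x hx
  have hminus := deriv_add_mul_eq_mul_cexp hu (s := -s) (by simpa only [neg_sq] using hode) x hx
  rw [h₀, h₁] at hplus hminus
  have h : (2 * s) * u x = 0 := by linear_combination hplus - hminus
  exact (mul_eq_zero.mp h).resolve_left (mul_ne_zero two_ne_zero hs)

end FirstIntegral

noncomputable def cexpPair (p q s : ℂ) (x : ℝ) : ℂ := p * cexp (s * x) + q * cexp (-s * x)

section CexpPair

variable (p q s : ℂ)

theorem contDiff_cexpPair {n : WithTop ℕ∞} : ContDiff ℝ n (cexpPair p q s) := by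
  have he : ∀ c : ℂ, ContDiff ℝ n (fun x : ℝ => cexp (c * x)) := fun c =>
    contDiff_exp.comp (contDiff_const.mul ofRealCLM.contDiff)
  exact (contDiff_const.mul (he s)).add (contDiff_const.mul (he (-s)))

theorem hasDerivAt_cexpPair (x : ℝ) :
    HasDerivAt (cexpPair p q s) (s * cexpPair p (-q) s x) x := by
  have h := ((hasDerivAt_cexp_mul_ofReal s x).const_mul p).add
    ((hasDerivAt_cexp_mul_ofReal (-s) x).const_mul q)
  exact h.congr_deriv (by simp only [cexpPair]; ring)

theorem deriv_cexpPair : deriv (cexpPair p q s) = fun x => s * cexpPair p (-q) s x :=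
  funext fun x => (hasDerivAt_cexpPair p q s x).deriv

theorem deriv_deriv_cexpPair (x : ℝ) :
    deriv (deriv (cexpPair p q s)) x = s ^ 2 * cexpPair p q s x := by
  simp only [deriv_cexpPair, deriv_const_mul_field', neg_neg]
  ring

end CexpPair

section RobinProblem

variable {a l : ℝ} {lam : ℂ} {u : ℝ → ℂ}

theorem deriv_deriv_eq_I_mul_sq_mul
    (hode : ∀ x ∈ Icc (0 : ℝ) l, -(deriv (deriv u) x) = lam ^ 2 * u x) :
    ∀ x ∈ Ico (0 : ℝ) l, deriv (deriv u) x = (I * lam) ^ 2 * u x := fun x hx => by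
  linear_combination -hode x (Ico_subset_Icc_self hx) - lam ^ 2 * u x * I_sq

theorem transcendental_eq_of_eigenfunction (hl : 0 ≤ l) (hu : ContDiff ℝ 2 u)
    (hode : ∀ x ∈ Icc (0 : ℝ) l, -(deriv (deriv u) x) = lam ^ 2 * u x)
    (h₀ : deriv u 0 = -I * a * u 0) (hₗ : deriv u l = I * a * u l) (hu₀ : u 0 ≠ 0) :
    (a - lam) ^ 2 * cexp (2 * I * lam * l) = (a + lam) ^ 2 := by
  have hode' := deriv_deriv_eq_I_mul_sq_mul hode
  have hl' : l ∈ Icc 0 l := right_mem_Icc.2 hl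
  have hplus := deriv_add_mul_eq_mul_cexp hu hode' l hl'
  have hminus := deriv_add_mul_eq_mul_cexp hu (s := -(I * lam))
    (by simpa only [neg_sq] using hode') l hl'
  rw [h₀, hₗ] at hplus hminus
  set E := cexp (I * lam * l)
  have hEE : cexp (2 * I * lam * l) = E * E := by rw [← exp_add]; ring_nf
  have hEinv : E * cexp (-(I * lam) * l) = 1 := by
    rw [neg_mul, exp_neg, mul_inv_cancel₀ (exp_ne_zero _)]
  simp only [ofReal_zero, sub_zero] at hplus hminus
  have h : I * ((a - lam) ^ 2 * (E * E) - (a + lam) ^ 2) * u 0 = 0 := by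
    linear_combination (a - lam) * E * hplus - (a + lam) * E * hminus
      + I * (a + lam) ^ 2 * u 0 * hEinv
  rw [hEE, ← sub_eq_zero]
  exact (mul_eq_zero.mp ((mul_eq_zero.mp h).resolve_right hu₀)).resolve_left I_ne_zero

theorem deriv_cexpPair_eq_I_mul_of_transcendental_eq
    (h : (a - lam) ^ 2 * cexp (2 * I * lam * l) = (a + lam) ^ 2) :
    deriv (cexpPair (lam - a) (lam + a) (I * lam)) l
      = I * a * cexpPair (lam - a) (lam + a) (I * lam) l := by
  set E := cexp (I * lam * l)
  have hEE : cexp (2 * I * lam * l) = E * E := by rw [← exp_add]; ring_nf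
  have hEinv : E * cexp (-(I * lam) * l) = 1 := by
    rw [neg_mul, exp_neg, mul_inv_cancel₀ (exp_ne_zero _)]
  rw [deriv_cexpPair]
  simp only [cexpPair]
  rw [hEE] at h
  linear_combination I * cexp (-(I * lam) * l) * h - I * (a - lam) ^ 2 * E * hEinv

end RobinProblem

/-- `λ² ≠ 0` is an eigenvalue of the transverse operator `T_a = -d²/dy²` on
`(0, l)` with boundary conditions `u'(0) = -i a u(0)`, `u'(l) = i a u(l)` if and
only if `(a - λ)² e^{2iλl} = (a + λ)²`. -/
theorem eigenvalue_iff_transcendental_equation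
    (a l : ℝ) (hl : 0 < l) (lam : ℂ) (hlam : lam ≠ 0) :
    (∃ u : ℝ → ℂ, ContDiff ℝ 2 u ∧
      (∃ x ∈ Set.Icc (0 : ℝ) l, u x ≠ 0) ∧
      (∀ x ∈ Set.Icc (0 : ℝ) l, -(deriv (deriv u) x) = lam ^ 2 * u x) ∧
      deriv u 0 = -Complex.I * (a : ℂ) * u 0 ∧
      deriv u l = Complex.I * (a : ℂ) * u l)
    ↔ ((a : ℂ) - lam) ^ 2 * Complex.exp (2 * Complex.I * lam * (l : ℂ))
        = ((a : ℂ) + lam) ^ 2 := by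
  constructor
  · rintro ⟨u, hu, ⟨x, hx, hux⟩, hode, h₀, hₗ⟩
    refine transcendental_eq_of_eigenfunction hl.le hu hode h₀ hₗ fun hu₀ => hux ?_
    exact eq_zero_of_eq_zero_of_deriv_eq_zero hu (mul_ne_zero I_ne_zero hlam)
      (deriv_deriv_eq_I_mul_sq_mul hode) hu₀ (by rw [h₀, hu₀, mul_zero]) x hx
  · intro h
    refine ⟨cexpPair (lam - a) (lam + a) (I * lam), contDiff_cexpPair _ _ _,
      ⟨0, left_mem_Icc.2 hl.le, ?_⟩, fun x _ => ?_, ?_, deriv_cexpPair_eq_I_mul_of_transcendental_eq h⟩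
    · simpa [cexpPair, ← two_mul] using hlam
    · rw [deriv_deriv_cexpPair]
      linear_combination -lam ^ 2 * cexpPair (lam - a) (lam + a) (I * lam) x * I_sq
    · simp only [deriv_cexpPair, cexpPair, ofReal_zero, mul_zero, exp_zero]
      ring
end

section
/- Let $a > 0$, $l > 0$, and set $\nu = \pi/l$. If $\lambda \in \mathbb{C}^*$ satisfies $(a - \lambda)^2 e^{2 i \lambda l} = (a + \lambda)^2$ and $\lambda^2$ is not a real eigenvalue (i.e., assume additionally that $\lambda \notin \mathbb{R}$), then $\mathrm{Re}(\lambda) \notin \nu \mathbb{N}$. More precisely: if $\mathrm{Re}(\lambda) \in \nu\mathbb{N}$ and $(a-\lambda)^2 e^{2i\lambda l} = (a+\lambda)^2$ with $\lambda \neq a$, then either $a = 0$ or $\lambda \in \mathbb{R}$. -/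
/-! If `Re λ · l ∈ πℕ`, then `e^{2iλl}` is a positive real, so `u = (a + λ)/(a - λ)` squares to a
positive real and is therefore itself real. Then `a + λ = u (a - λ)`: comparing imaginary parts
forces `λ ∈ ℝ` unless `u = -1`, and `u = -1` means `a = 0`. -/

open Complex

lemma Complex.exp_two_mul_I_mul_of_re_eq_int_mul_pi {z : ℂ} {n : ℤ} (h : z.re = n * Real.pi) :
    exp (2 * I * z) = Real.exp (-2 * z.im) := by
  have hsplit : 2 * I * z = ((-2 * z.im : ℝ) : ℂ) + n * (2 * Real.pi * I) := by
    apply Complex.ext <;> simp [h]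
    ring
  rw [hsplit, exp_add, exp_int_mul_two_pi_mul_I, mul_one, ofReal_exp]

lemma Complex.im_eq_zero_of_sq_eq_ofReal {u : ℂ} {t : ℝ} (ht : 0 ≤ t) (h : u ^ 2 = t) :
    u.im = 0 := by
  have hsq : u ^ 2 = (Real.sqrt t : ℂ) ^ 2 := by rw [← ofReal_pow, Real.sq_sqrt ht, h]
  rcases sq_eq_sq_iff_eq_or_eq_neg.mp hsq with hu | hu <;> simp [hu]

lemma eq_zero_or_im_eq_zero_of_add_eq_ofReal_mul_sub {a r : ℝ} {z : ℂ}
    (h : (a : ℂ) + z = r * ((a : ℂ) - z)) : a = 0 ∨ z.im = 0 := by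
  have him := congrArg im h
  have hre := congrArg re h
  simp only [add_re, add_im, sub_re, sub_im, ofReal_re, ofReal_im, re_ofReal_mul,
    im_ofReal_mul] at him hre
  rcases eq_or_ne z.im 0 with hz | hz
  · exact Or.inr hz
  · have hr : r = -1 := by
      have : (r + 1) * z.im = 0 := by linarith
      linarith [(mul_eq_zero.mp this).resolve_right hz]
    left
    subst hr
    linarith

/-- If `Re λ ∈ ν ℕ` (with `ν = π / l`) and `(a - λ)² e^{2iλl} = (a + λ)²` with
`λ ≠ a`, then either `a = 0` or `λ ∈ ℝ`.  In particular, for `a > 0` no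
eigenvalue parameter `λ ∉ ℝ` can have real part in `ν ℕ`. -/
theorem re_not_in_nuN
    (a l : ℝ) (hl : 0 < l) (lam : ℂ) (hne : lam ≠ (a : ℂ))
    (hre : ∃ n : ℕ, lam.re = (n : ℝ) * (Real.pi / l))
    (heq : ((a : ℂ) - lam) ^ 2 * Complex.exp (2 * Complex.I * lam * (l : ℂ))
      = ((a : ℂ) + lam) ^ 2) :
    a = 0 ∨ lam.im = 0 := by
  obtain ⟨n, hn⟩ := hre
  have hexp : exp (2 * I * lam * l) = Real.exp (-2 * (lam * l).im) := by
    rw [mul_assoc (2 * I)]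
    refine exp_two_mul_I_mul_of_re_eq_int_mul_pi (n := n) ?_
    rw [re_mul_ofReal, hn]
    field_simp
    push_cast
    ring
  have hsub : (a : ℂ) - lam ≠ 0 := sub_ne_zero.mpr hne.symm
  set u := ((a : ℂ) + lam) / ((a : ℂ) - lam) with hu
  have hu_sq : u ^ 2 = Real.exp (-2 * (lam * l).im) := by
    rw [hu, div_pow, ← heq, hexp]
    field_simp
  have hu_real : (u.re : ℂ) = u :=
    ext rfl (by simp [im_eq_zero_of_sq_eq_ofReal (Real.exp_pos _).le hu_sq])
  refine eq_zero_or_im_eq_zero_of_add_eq_ofReal_mul_sub (r := u.re) ?_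
  rw [hu_real, hu, div_mul_cancel₀ _ hsub]
end

section
/- Let $l > 0$ and $R > 0$. There exists $C_R \geq 0$ such that for all $a \in \mathbb{R}$ and all $\lambda = x + iy \in \mathbb{C}^*$ with $(a - \lambda)^2 e^{2 i \lambda l} = (a + \lambda)^2$ and $|x| \leq R$, one has $|y| \leq C_R$. That is, solutions of the eigenvalue equation with bounded real part have uniformly bounded imaginary part, uniformly in the parameter $a$. -/
/-! Taking moduli, the equation gives `e^{-2yl} = |a + λ|² / |a - λ|²`. Once `|y| ≥ 3|x|`
this ratio lies in `[1/2, 2]` whatever `a` is, so `|y| ≤ log 2 / (2l)`; otherwise `|y| < 3R`. -/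

open Complex

lemma Real.abs_le_log_of_exp_le_of_exp_neg_le {t c : ℝ} (h : Real.exp t ≤ c)
    (h' : Real.exp (-t) ≤ c) : |t| ≤ Real.log c := by
  have hc : 0 < c := (Real.exp_pos t).trans_le h
  rw [abs_le, neg_le, Real.le_log_iff_exp_le hc, Real.le_log_iff_exp_le hc]
  exact ⟨h', h⟩

namespace Complex

lemma sq_norm_ofReal_add_le_two_mul_sq_norm_ofReal_sub (a : ℝ) {z : ℂ}
    (hz : 3 * |z.re| ≤ |z.im|) : ‖(a : ℂ) + z‖ ^ 2 ≤ 2 * ‖(a : ℂ) - z‖ ^ 2 := by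
  have h9 : 9 * z.re ^ 2 ≤ z.im ^ 2 := by
    rw [← sq_abs z.re, ← sq_abs z.im]
    nlinarith [abs_nonneg z.re]
  simp only [Complex.sq_norm, normSq_apply, add_re, sub_re, ofReal_re, add_im, sub_im, ofReal_im]
  -- `2 (a - x)² + 9 x² - (a + x)² = (a - 3x)² + x²`
  nlinarith [sq_nonneg (a - 3 * z.re)]

lemma sq_norm_ofReal_sub_le_two_mul_sq_norm_ofReal_add (a : ℝ) {z : ℂ}
    (hz : 3 * |z.re| ≤ |z.im|) : ‖(a : ℂ) - z‖ ^ 2 ≤ 2 * ‖(a : ℂ) + z‖ ^ 2 := by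
  have h := sq_norm_ofReal_add_le_two_mul_sq_norm_ofReal_sub (-a) hz
  rwa [ofReal_neg, neg_add_eq_sub, ← neg_sub, norm_neg, ← neg_add', norm_neg] at h

lemma sq_norm_mul_exp_eq_of_eigen {a l : ℝ} {z : ℂ}
    (h : ((a : ℂ) - z) ^ 2 * exp (2 * I * z * l) = ((a : ℂ) + z) ^ 2) :
    ‖(a : ℂ) - z‖ ^ 2 * Real.exp (-(2 * l * z.im)) = ‖(a : ℂ) + z‖ ^ 2 := by
  have h_re : (2 * I * z * l).re = -(2 * l * z.im) := by
    simp only [mul_re, mul_im, I_re, I_im, ofReal_re, ofReal_im, re_ofNat, im_ofNat]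
    ring
  simpa only [norm_mul, norm_pow, norm_exp, h_re] using congrArg norm h

lemma abs_im_le_of_eigen {a l : ℝ} (hl : 0 < l) {z : ℂ}
    (h : ((a : ℂ) - z) ^ 2 * exp (2 * I * z * l) = ((a : ℂ) + z) ^ 2)
    (hz : 3 * |z.re| ≤ |z.im|) : |z.im| ≤ Real.log 2 / (2 * l) := by
  rcases eq_or_ne z.im 0 with h_im | h_im
  · rw [h_im, abs_zero]
    positivity
  have hD : 0 < ‖(a : ℂ) - z‖ ^ 2 := by
    refine pow_pos (norm_pos_iff.mpr fun h0 => h_im ?_) 2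
    simpa using congrArg im h0
  have h_eq := sq_norm_mul_exp_eq_of_eigen h
  have h_up := sq_norm_ofReal_add_le_two_mul_sq_norm_ofReal_sub a hz
  have h_low := sq_norm_ofReal_sub_le_two_mul_sq_norm_ofReal_add a hz
  set t := 2 * l * z.im
  have h_neg : Real.exp (-t) ≤ 2 := le_of_mul_le_mul_left (by linarith) hD
  have h_pos : Real.exp t ≤ 2 := by
    have h_one : 1 ≤ 2 * Real.exp (-t) := le_of_mul_le_mul_left (by linarith) hD
    rw [Real.exp_neg] at h_one
    rwa [le_mul_inv_iff₀ (Real.exp_pos t), one_mul] at h_one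
  have ht : |t| = 2 * l * |z.im| := by
    rw [abs_mul, abs_of_pos (by positivity : 0 < 2 * l)]
  rw [le_div_iff₀ (by positivity), mul_comm, ← ht]
  exact Real.abs_le_log_of_exp_le_of_exp_neg_le h_pos h_neg

end Complex

theorem imaginary_part_uniformly_bounded_general
    (l R : ℝ) (hl : 0 < l) :
    ∃ C : ℝ, 0 ≤ C ∧ ∀ (a x y : ℝ),
      (x : ℂ) + (y : ℂ) * Complex.I ≠ 0 →
      ((a : ℂ) - ((x : ℂ) + (y : ℂ) * Complex.I)) ^ 2 *
          Complex.exp (2 * Complex.I * ((x : ℂ) + (y : ℂ) * Complex.I) * (l : ℂ))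
        = ((a : ℂ) + ((x : ℂ) + (y : ℂ) * Complex.I)) ^ 2 →
      |x| ≤ R → |y| ≤ C := by
  refine ⟨max (3 * R) (Real.log 2 / (2 * l)), le_max_of_le_right (by positivity), ?_⟩
  intro a x y _ h hx
  rcases le_or_gt (3 * |x|) |y| with hxy | hxy
  · have hy := abs_im_le_of_eigen hl h (by simpa using hxy)
    simp only [add_im, ofReal_im, mul_im, ofReal_re, I_im, I_re] at hy
    exact le_max_of_le_right (by simpa using hy)
  · exact le_max_of_le_left (by linarith)

/-- Solutions `λ = x + i y` of the eigenvalue equation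
`(a - λ)² e^{2iλl} = (a + λ)²` with `|x| ≤ R` have uniformly bounded imaginary
part, uniformly in the parameter `a ∈ ℝ`. -/
theorem imaginary_part_uniformly_bounded
    (l R : ℝ) (hl : 0 < l) (hR : 0 < R) :
    ∃ C : ℝ, 0 ≤ C ∧ ∀ (a x y : ℝ),
      (x : ℂ) + (y : ℂ) * Complex.I ≠ 0 →
      ((a : ℂ) - ((x : ℂ) + (y : ℂ) * Complex.I)) ^ 2 *
          Complex.exp (2 * Complex.I * ((x : ℂ) + (y : ℂ) * Complex.I) * (l : ℂ))
        = ((a : ℂ) + ((x : ℂ) + (y : ℂ) * Complex.I)) ^ 2 →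
      |x| ≤ R → |y| ≤ C :=
  imaginary_part_uniformly_bounded_general l R hl
end

section
/- Let $l > 0$ and let $(\lambda_n)_{n\in\mathbb{N}}$ be complex numbers satisfying $\lambda_n = n\pi/l + O(1/n)$. Set $e_n(x) = e^{i\lambda_n x}$ for $x \in [0,l]$. Then there exists $C \geq 0$ such that for all $j < k$: $|\langle e_j, e_k\rangle_{L^2(0,l)}| \leq C/(k - j)$ and $|\langle e_j, e_k\rangle + \langle \tilde{e}_j, \tilde{e}_k\rangle| \leq C/(\langle j\rangle (k-j))$, where $\tilde{e}_n(x) = e^{-i\lambda_n x}$ and $\langle j \rangle = (1 + j^2)^{1/2}$. -/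
open Filter Asymptotics Complex ComplexConjugate
open scoped Real

/-!
With `μ = λ_j - conj λ_k`, both inner products are integrals of one exponential:
`⟨e_j, e_k⟩ = ∫₀ˡ e^{iμx} dx`, and the sum with `⟨ẽ_j, ẽ_k⟩` is `2 sin (μl) / μ`.
The hypothesis gives `μ = η - (k - j)π/l` with `‖η‖ ≤ 2A/(j + 1)`, so `Im μ` is bounded and
every exponential stays bounded on `[0, l]`. When `‖η‖ ≤ (k - j)/l` we have `‖μ‖ ≥ (k - j)/l`
and the closed forms give both bounds; the second uses `sin (μl) = ± sin (ηl) = O(‖η‖)`, which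
is where the cancellation between the two inner products happens. Otherwise `(j + 1)(k - j)` is
bounded and the trivial bound `l e^{l |Im μ|}` on the integrals suffices.
-/

theorem exp_mul_mul_conj_exp_mul {c : ℂ} (hc : conj c = -c) (a b : ℂ) (x : ℝ) :
    exp (c * a * x) * conj (exp (c * b * x)) = exp (c * (a - conj b) * x) := by
  rw [← exp_conj, ← exp_add, map_mul, map_mul, hc, conj_ofReal]
  ring_nf

section

variable {z : ℂ} {l B : ℝ}

theorem norm_exp_mul_ofReal_le (hz : |z.re| ≤ B) {x : ℝ} (hx : x ∈ Set.Icc 0 l) :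
    ‖exp (z * x)‖ ≤ Real.exp (l * B) := by
  rw [norm_exp, re_mul_ofReal]
  refine Real.exp_le_exp.2 ?_
  calc z.re * x ≤ |z.re| * x := by gcongr; exacts [hx.1, le_abs_self _]
    _ ≤ l * B := by rw [mul_comm]; exact mul_le_mul hx.2 hz (abs_nonneg _) (hx.1.trans hx.2)

theorem norm_integral_exp_mul_le_mul (hl : 0 ≤ l) (hz : |z.re| ≤ B) :
    ‖∫ x in (0:ℝ)..l, exp (z * x)‖ ≤ l * Real.exp (l * B) := by
  have := intervalIntegral.norm_integral_le_of_norm_le_const (a := 0) (b := l)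
    fun x hx => norm_exp_mul_ofReal_le hz (Set.Ioc_subset_Icc_self
      (by rwa [Set.uIoc_of_le hl] at hx))
  rwa [sub_zero, abs_of_nonneg hl, mul_comm] at this

theorem norm_integral_exp_mul_le_div (hz0 : z ≠ 0) (hl : 0 ≤ l) (hz : |z.re| ≤ B) :
    ‖∫ x in (0:ℝ)..l, exp (z * x)‖ ≤ (Real.exp (l * B) + 1) / ‖z‖ := by
  rw [integral_exp_mul_complex hz0, ofReal_zero, mul_zero, exp_zero, norm_div]
  gcongr
  exact (norm_sub_le _ _).trans (by
    rw [norm_one]; gcongr; exact norm_exp_mul_ofReal_le hz ⟨hl, le_rfl⟩)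

end

theorem integral_exp_I_mul_add_integral_exp_neg_I_mul {μ : ℂ} (hμ : μ ≠ 0) (l : ℝ) :
    (∫ x in (0:ℝ)..l, exp (I * μ * x)) + ∫ x in (0:ℝ)..l, exp (-I * μ * x)
      = 2 * sin (μ * l) / μ := by
  have hIμ : I * μ ≠ 0 := mul_ne_zero I_ne_zero hμ
  rw [integral_exp_mul_complex hIμ, integral_exp_mul_complex (by simpa using hIμ), sin]
  simp only [ofReal_zero, mul_zero, exp_zero]
  field_simp
  rw [I_sq]
  ring_nf

theorem norm_sin_le_norm_mul_exp_norm (w : ℂ) : ‖sin w‖ ≤ ‖w‖ * Real.exp ‖w‖ := by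
  have hexp (v : ℂ) : ‖exp v - 1‖ ≤ ‖v‖ * Real.exp ‖v‖ := by
    simpa using norm_exp_sub_sum_le_norm_mul_exp v 1
  have : sin w = ((exp (-w * I) - 1) - (exp (w * I) - 1)) * I / 2 := by
    rw [sin]; ring
  rw [this, norm_div, norm_mul, norm_I, mul_one, Complex.norm_two]
  calc _ ≤ (‖w‖ * Real.exp ‖w‖ + ‖w‖ * Real.exp ‖w‖) / 2 := by
        gcongr
        refine (norm_sub_le _ _).trans (add_le_add ?_ ?_) <;>
          exact (hexp _).trans_eq (by simp)
    _ = _ := by ring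

theorem abs_im_le_norm_add_ofReal (μ : ℂ) (r : ℝ) : |μ.im| ≤ ‖μ + r‖ := by
  simpa using abs_im_le_norm (μ + r)

section

variable {l : ℝ} {μ : ℂ}

theorem div_le_norm_of_norm_add_le (hl : 0 < l) {d : ℝ} (hd : 0 ≤ d)
    (hμ : ‖μ + ((d * π / l : ℝ) : ℂ)‖ ≤ d / l) : d / l ≤ ‖μ‖ := by
  have h_tri : d * π / l ≤ ‖μ + ((d * π / l : ℝ) : ℂ)‖ + ‖μ‖ :=
    calc d * π / l = ‖((d * π / l : ℝ) : ℂ)‖ := by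
          rw [norm_real, Real.norm_of_nonneg (by positivity)]
      _ = ‖(μ + ((d * π / l : ℝ) : ℂ)) - μ‖ := by ring_nf
      _ ≤ _ := norm_sub_le _ _
  have h_two : 2 * (d / l) ≤ d * π / l := by
    rw [mul_div_assoc', mul_comm 2 d]; gcongr; exact Real.two_le_pi
  linarith

theorem norm_integral_exp_I_mul_le_of_norm_add_le (hl : 0 < l) {B d : ℝ} (hd : 0 < d)
    (hμ : ‖μ + ((d * π / l : ℝ) : ℂ)‖ ≤ B) :
    ‖∫ x in (0:ℝ)..l, exp (I * μ * x)‖ ≤ l * (l * B + 2) * Real.exp (l * B) / d := by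
  have hB : 0 ≤ B := (norm_nonneg _).trans hμ
  have hE : 1 ≤ Real.exp (l * B) := Real.one_le_exp (by positivity)
  have hre : |(I * μ).re| ≤ B := by simpa using (abs_im_le_norm_add_ofReal _ _).trans hμ
  rcases le_or_gt ‖μ + ((d * π / l : ℝ) : ℂ)‖ (d / l) with h_near | h_far
  · have hμ_ge := div_le_norm_of_norm_add_le hl hd.le h_near
    have hμ0 : I * μ ≠ 0 :=
      mul_ne_zero I_ne_zero (norm_pos_iff.1 ((div_pos hd hl).trans_le hμ_ge))
    calc _ ≤ (Real.exp (l * B) + 1) / ‖I * μ‖ := norm_integral_exp_mul_le_div hμ0 hl.le hre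
      _ ≤ (Real.exp (l * B) + 1) / (d / l) := by
          rw [norm_mul, norm_I, one_mul]; gcongr
      _ ≤ _ := by
          rw [div_div_eq_mul_div]; gcongr ?_ / d
          nlinarith [mul_le_mul_of_nonneg_left hE hl.le,
            mul_nonneg (mul_nonneg hl.le hl.le) (mul_nonneg hB (Real.exp_pos (l * B)).le)]
  · have h_dl : d < l * B := by
      rw [div_lt_iff₀ hl] at h_far; nlinarith
    calc _ ≤ l * Real.exp (l * B) := norm_integral_exp_mul_le_mul hl.le hre
      _ ≤ _ := by
          rw [le_div_iff₀ hd]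
          nlinarith [mul_pos hl (Real.exp_pos (l * B))]

theorem norm_integral_exp_I_mul_add_integral_exp_neg_I_mul_le_of_norm_add_le
    (hl : 0 < l) {ε B : ℝ} (hεB : ε ≤ B) {d : ℕ} (hd : 0 < d)
    (hμ : ‖μ + ((d * π / l : ℝ) : ℂ)‖ ≤ ε) :
    ‖(∫ x in (0:ℝ)..l, exp (I * μ * x)) + ∫ x in (0:ℝ)..l, exp (-I * μ * x)‖
      ≤ 2 * l ^ 2 * Real.exp (l * B) * ε / d := by
  set η := μ + ((d * π / l : ℝ) : ℂ)
  have hd' : (0 : ℝ) < d := by exact_mod_cast hd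
  have hε : 0 ≤ ε := (norm_nonneg _).trans hμ
  rcases le_or_gt ‖η‖ (d / l) with h_near | h_far
  · have hμ_ge := div_le_norm_of_norm_add_le hl hd'.le h_near
    have hμ0 : μ ≠ 0 := norm_pos_iff.1 ((div_pos hd' hl).trans_le hμ_ge)
    have h_sin : ‖sin (μ * l)‖ = ‖sin (η * l)‖ := by
      have hl0 : (l : ℂ) ≠ 0 := by exact_mod_cast hl.ne'
      have : μ * l = η * l - d * π := by simp only [η]; push_cast; field_simp; ring
      rw [this, sin_antiperiodic.sub_nat_mul_eq, norm_mul, norm_pow, norm_neg, norm_one,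
        one_pow, one_mul]
    have h_ηl : ‖η * l‖ ≤ ε * l := by
      rw [norm_mul, norm_real, Real.norm_of_nonneg hl.le]; gcongr
    rw [integral_exp_I_mul_add_integral_exp_neg_I_mul hμ0, norm_div, norm_mul, Complex.norm_two,
      h_sin]
    calc _ ≤ 2 * (ε * l * Real.exp (l * B)) / (d / l) := by
          gcongr
          refine (norm_sin_le_norm_mul_exp_norm _).trans ?_
          gcongr
          rw [mul_comm l B]; exact h_ηl.trans (by gcongr)
      _ = _ := by field_simp
  · have h_dl : (d : ℝ) ≤ l * ε := by
      rw [div_lt_iff₀ hl] at h_far; nlinarith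
    have him : |μ.im| ≤ B := (abs_im_le_norm_add_ofReal _ _).trans (hμ.trans hεB)
    calc _ ≤ l * Real.exp (l * B) + l * Real.exp (l * B) :=
          (norm_add_le _ _).trans (add_le_add
            (norm_integral_exp_mul_le_mul hl.le (by simpa using him))
            (norm_integral_exp_mul_le_mul hl.le (by simpa using him)))
      _ ≤ _ := by
          rw [le_div_iff₀ hd']
          nlinarith [mul_pos hl (Real.exp_pos (l * B))]

end

theorem exists_norm_le_div_add_one_of_isBigO_inv {E : Type*} [NormedAddCommGroup E]
    {f : ℕ → E} (h : f =O[atTop] fun n : ℕ => 1 / (n : ℝ)) :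
    ∃ A, 0 ≤ A ∧ ∀ n : ℕ, ‖f n‖ ≤ A / (n + 1) := by
  have h_inv : (fun n : ℕ => 1 / (n : ℝ)) =O[atTop] fun n : ℕ => 1 / ((n : ℝ) + 1) := by
    refine IsBigO.of_bound 2 (eventually_atTop.2 ⟨1, fun n hn => ?_⟩)
    have hn' : (1 : ℝ) ≤ n := by exact_mod_cast hn
    rw [Real.norm_of_nonneg (by positivity), Real.norm_of_nonneg (by positivity),
      div_le_iff₀ (by positivity)]
    field_simp
    linarith
  obtain ⟨A, hA⟩ := (isBigO_nat_atTop_iff fun n hn => absurd hn (by positivity)).1 (h.trans h_inv)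
  have hA' (n : ℕ) : ‖f n‖ ≤ A / (n + 1) :=
    (hA n).trans_eq (by rw [Real.norm_of_nonneg (by positivity)]; ring)
  exact ⟨A, by simpa using (norm_nonneg _).trans (hA' 0), hA'⟩

theorem norm_sub_conj_add_le_of_norm_sub_le {l A : ℝ} (hA0 : 0 ≤ A) {lam : ℕ → ℂ}
    (hA : ∀ n : ℕ, ‖lam n - n * ((π / l : ℝ) : ℂ)‖ ≤ A / (n + 1)) (j d : ℕ) :
    ‖lam j - conj (lam (j + d)) + ((d * π / l : ℝ) : ℂ)‖ ≤ 2 * A / (j + 1) := by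
  have h_eq : lam j - conj (lam (j + d)) + ((d * π / l : ℝ) : ℂ)
      = (lam j - j * ((π / l : ℝ) : ℂ))
        - conj (lam (j + d) - ((j + d : ℕ) : ℂ) * ((π / l : ℝ) : ℂ)) := by
    simp only [map_sub, map_mul, conj_ofReal, map_natCast]; push_cast; ring
  have h_succ : A / ((j + d : ℕ) + 1) ≤ A / (j + 1) := by gcongr; simp
  rw [h_eq]
  calc _ ≤ ‖lam j - j * ((π / l : ℝ) : ℂ)‖
        + ‖lam (j + d) - ((j + d : ℕ) : ℂ) * ((π / l : ℝ) : ℂ)‖ := by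
        rw [← Complex.norm_conj (lam (j + d) - _)]; exact norm_sub_le _ _
    _ ≤ A / (j + 1) + A / (j + 1) := add_le_add (hA j) ((hA (j + d)).trans h_succ)
    _ = _ := by ring

/-- Off-diagonal estimates for the family `e_n(x) = e^{iλ_n x}`,
`ẽ_n(x) = e^{-iλ_n x}` when `λ_n = nπ/l + O(1/n)`: for `j < k`,
`|⟨e_j, e_k⟩| ≤ C/(k-j)` and `|⟨e_j, e_k⟩ + ⟨ẽ_j, ẽ_k⟩| ≤ C/(⟨j⟩(k-j))`. -/
theorem off_diagonal_inner_product_estimates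
    (l : ℝ) (hl : 0 < l) (lam : ℕ → ℂ)
    (h : (fun n : ℕ => lam n - (n : ℂ) * ((Real.pi / l : ℝ) : ℂ))
      =O[atTop] fun n : ℕ => 1 / (n : ℝ)) :
    ∃ C : ℝ, 0 ≤ C ∧ ∀ j k : ℕ, j < k →
      ‖(∫ x in (0:ℝ)..l,
          Complex.exp (Complex.I * lam j * (x : ℂ)) *
            (starRingEnd ℂ) (Complex.exp (Complex.I * lam k * (x : ℂ))))‖
        ≤ C / ((k : ℝ) - (j : ℝ)) ∧
      ‖((∫ x in (0:ℝ)..l,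
          Complex.exp (Complex.I * lam j * (x : ℂ)) *
            (starRingEnd ℂ) (Complex.exp (Complex.I * lam k * (x : ℂ)))) +
        (∫ x in (0:ℝ)..l,
          Complex.exp (-Complex.I * lam j * (x : ℂ)) *
            (starRingEnd ℂ) (Complex.exp (-Complex.I * lam k * (x : ℂ)))))‖
        ≤ C / (Real.sqrt (1 + (j : ℝ) ^ 2) * ((k : ℝ) - (j : ℝ))) := by
  obtain ⟨A, hA0, hA⟩ := exists_norm_le_div_add_one_of_isBigO_inv h
  set E := Real.exp (l * (2 * A))
  set K₁ := l * (l * (2 * A) + 2) * E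
  set K₂ := 2 * l ^ 2 * E
  refine ⟨K₁ + 2 * A * K₂, by positivity, fun j k hjk => ?_⟩
  obtain ⟨d, rfl⟩ := Nat.exists_eq_add_of_le hjk.le
  have hd : 0 < d := by omega
  rw [show ((j + d : ℕ) : ℝ) - j = d by push_cast; ring]
  simp only [exp_mul_mul_conj_exp_mul conj_I, exp_mul_mul_conj_exp_mul (c := -I) (by simp)]
  have hη := norm_sub_conj_add_le_of_norm_sub_le hA0 hA j d
  have h_two_A : 2 * A / (j + 1) ≤ 2 * A := div_le_self (by positivity) (by simp)
  have h_sqrt : √(1 + (j : ℝ) ^ 2) ≤ j + 1 :=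
    Real.sqrt_le_iff.2 ⟨by positivity, by nlinarith [(j.cast_nonneg : (0 : ℝ) ≤ j)]⟩
  refine ⟨(norm_integral_exp_I_mul_le_of_norm_add_le hl (by positivity)
      (hη.trans h_two_A)).trans ?_,
    (norm_integral_exp_I_mul_add_integral_exp_neg_I_mul_le_of_norm_add_le hl h_two_A hd
      hη).trans ?_⟩
  · gcongr; exact le_add_of_nonneg_right (by positivity)
  · calc K₂ * (2 * A / (j + 1)) / d = 2 * A * K₂ / ((j + 1) * d) := by field_simp
      _ ≤ (K₁ + 2 * A * K₂) / (√(1 + (j : ℝ) ^ 2) * d) := by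
          gcongr
          exact le_add_of_nonneg_left (by positivity)
end

section
/- Let $a_l, a_0 \in \mathbb{R}$ with $a_l + a_0 > 0$ and $a_l a_0 < 0$, and $l > 0$. Let $(\lambda(s))_{s > 0}$ be a family of complex numbers, bounded with bounded imaginary part, satisfying $\mathrm{Re}(\lambda(s)) > \pi/l$ for all $s$ and $(\lambda(s) - s a_l)(\lambda(s) - s a_0) e^{2 i \lambda(s) l} = (\lambda(s) + s a_l)(\lambda(s) + s a_0)$. Then for all sufficiently large $s$, $\mathrm{Im}(\lambda(s)) > 0$. -/
/-!
Taking moduli in `(λ - s a_l)(λ - s a_0) e^{2iλl} = (λ + s a_l)(λ + s a_0)` gives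
`|(λ - s a_l)(λ - s a_0)| e^{-2l Im λ} = |(λ + s a_l)(λ + s a_0)|`. The difference of the squared
moduli of the two products is `4 Re λ · s(a_l + a_0) · (-s² a_l a_0 - |λ|²)`, which is positive as
soon as `s² |a_l a_0|` exceeds the bound on `|λ|²`; then `e^{-2l Im λ} < 1`, i.e. `Im λ > 0`.
-/

open Complex Filter

lemma norm_mul_add_lt_norm_mul_sub {z : ℂ} {a b : ℝ} (hz : 0 < z.re) (hab : 0 < a + b)
    (hzab : ‖z‖ ^ 2 < -(a * b)) : ‖(z + a) * (z + b)‖ < ‖(z - a) * (z - b)‖ := by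
  rw [← sq_lt_sq₀ (norm_nonneg _) (norm_nonneg _), Complex.sq_norm, Complex.sq_norm]
  rw [Complex.sq_norm, normSq_apply] at hzab
  have hdiff : normSq ((z - a) * (z - b)) - normSq ((z + a) * (z + b))
      = 4 * z.re * (a + b) * (-(a * b) - (z.re * z.re + z.im * z.im)) := by
    simp only [map_mul, normSq_apply, add_re, add_im, sub_re, sub_im, ofReal_re, ofReal_im]
    ring
  have hpos : 0 < 4 * z.re * (a + b) * (-(a * b) - (z.re * z.re + z.im * z.im)) := by
    have hgap := sub_pos.2 hzab
    positivity
  linarith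

lemma im_pos_of_mul_cexp_eq {l : ℝ} {z v w : ℂ} (hl : 0 < l) (hwv : ‖w‖ < ‖v‖)
    (h : v * cexp (2 * I * z * l) = w) : 0 < z.im := by
  have hv : 0 < ‖v‖ := (norm_nonneg w).trans_lt hwv
  have hnorm : ‖cexp (2 * I * z * l)‖ = Real.exp (-(2 * l * z.im)) := by
    rw [norm_exp]
    congr 1
    simp only [mul_re, mul_im, re_ofNat, im_ofNat, I_re, I_im, ofReal_re, ofReal_im, mul_zero,
      mul_one, zero_mul, sub_self, add_zero, zero_add, zero_sub, sub_zero, neg_mul, neg_inj]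
    ring
  rw [← h, norm_mul, hnorm, mul_lt_iff_lt_one_right hv, Real.exp_lt_one_iff] at hwv
  nlinarith

/-- For `a_l + a_0 > 0`, `a_l a_0 < 0`, a bounded family `λ(s)` of solutions of
`(λ - s a_l)(λ - s a_0) e^{2iλl} = (λ + s a_l)(λ + s a_0)` with
`Re λ(s) > π/l` has `Im λ(s) > 0` for all sufficiently large `s`. -/
theorem eigenvalues_move_up_for_large_dissipation
    (l al a0 : ℝ) (hl : 0 < l) (hsum : 0 < al + a0) (hprod : al * a0 < 0)
    (lam : ℝ → ℂ)
    (hbd : ∃ M : ℝ, ∀ s > (0:ℝ), ‖lam s‖ ≤ M)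
    (hre : ∀ s > (0:ℝ), Real.pi / l < (lam s).re)
    (heq : ∀ s > (0:ℝ),
      (lam s - (s : ℂ) * (al : ℂ)) * (lam s - (s : ℂ) * (a0 : ℂ)) *
          Complex.exp (2 * Complex.I * lam s * (l : ℂ))
        = (lam s + (s : ℂ) * (al : ℂ)) * (lam s + (s : ℂ) * (a0 : ℂ))) :
    ∃ S : ℝ, ∀ s ≥ S, 0 < (lam s).im := by
  obtain ⟨M, hM⟩ := hbd
  have hgrow : ∀ᶠ s in atTop, M ^ 2 < -(al * a0) * s ^ 2 :=
    ((tendsto_pow_atTop two_ne_zero).const_mul_atTop (neg_pos.2 hprod)).eventually_gt_atTop _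
  rw [← eventually_atTop]
  filter_upwards [eventually_gt_atTop 0, hgrow] with s hs hsM
  have hlam : ‖lam s‖ ^ 2 < -((s * al) * (s * a0)) :=
    calc ‖lam s‖ ^ 2 ≤ M ^ 2 := pow_le_pow_left₀ (norm_nonneg _) (hM s hs) 2
      _ < -((s * al) * (s * a0)) := by linarith
  have hre_pos : 0 < (lam s).re := (div_pos Real.pi_pos hl).trans (hre s hs)
  have hnorm :=
    norm_mul_add_lt_norm_mul_sub hre_pos (by rw [← mul_add]; exact mul_pos hs hsum) hlam
  push_cast at hnorm
  exact im_pos_of_mul_cexp_eq hl hnorm (heq s hs)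
end
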